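/- Let $C = \{(\psi, \varphi_1, \varphi_2) \in \mathbb{R}^3 : \psi > 0,\ \varphi_2 - \varphi_1 > 0,\ 2\varphi_1 - \varphi_2 > 0\}$ be the open dual Weyl cone of $A_1 \oplus C_2$, and let $\varpi_1 = \varphi_1 - \psi$ and $\varpi_2 = \psi + \varphi_1 - \varphi_2$ be the two interior walls. Then: (i) for every point of $C$ one has $\varpi_1 + \varpi_2 > 0$, so $\varpi_1$ and $\varpi_2$ are never both negative on $C$; (ii) the subset of $C$ on which $\varpi_1 \varpi_2 \neq 0$ is the disjoint union of exactly three nonempty open chambers, namely $[-,+] = \{\varphi_2 > 0,\ \varphi_2/2 < \varphi_1 < \varphi_2,\ \psi > \varphi_1\}$, $[+,+] = \{\varphi_2 > 0,\ \varphi_2/2 < \varphi_1 < \varphi_2,\ \varphi_2 - \varphi_1 < \psi < \varphi_1\}$, and $[+,-] = \{\varphi_1 > 0,\ \varphi_1 < \varphi_2 < 2\varphi_1,\ 0 < \psi < \varphi_2 - \varphi_1\}$, and on these chambers the pair of signs of $(\varpi_1, \varpi_2)$ is respectively $(-,+)$, $(+,+)$, $(+,-)$. -/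
import Mathlib


/-- The open dual Weyl cone of `A₁ ⊕ C₂`, in coordinates `(ψ, φ₁, φ₂)`. -/
def coneA1C2 : Set (ℝ × ℝ × ℝ) :=
  {p | 0 < p.1 ∧ 0 < p.2.2 - p.2.1 ∧ 0 < 2 * p.2.1 - p.2.2}

/-- The interior wall `ϖ₁ = φ₁ - ψ`. -/
def wallOne (p : ℝ × ℝ × ℝ) : ℝ := p.2.1 - p.1

/-- The interior wall `ϖ₂ = ψ + φ₁ - φ₂`. -/
def wallTwo (p : ℝ × ℝ × ℝ) : ℝ := p.1 + p.2.1 - p.2.2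

/-- The chamber `[-,+] = {φ₂ > 0, φ₂/2 < φ₁ < φ₂, ψ > φ₁}`. -/
def chamberMP : Set (ℝ × ℝ × ℝ) :=
  {p | 0 < p.2.2 ∧ p.2.2 / 2 < p.2.1 ∧ p.2.1 < p.2.2 ∧ p.2.1 < p.1}

/-- The chamber `[+,+] = {φ₂ > 0, φ₂/2 < φ₁ < φ₂, φ₂ - φ₁ < ψ < φ₁}`. -/
def chamberPP : Set (ℝ × ℝ × ℝ) :=
  {p | 0 < p.2.2 ∧ p.2.2 / 2 < p.2.1 ∧ p.2.1 < p.2.2 ∧ p.2.2 - p.2.1 < p.1 ∧ p.1 < p.2.1}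

/-- The chamber `[+,-] = {φ₁ > 0, φ₁ < φ₂ < 2φ₁, 0 < ψ < φ₂ - φ₁}`. -/
def chamberPM : Set (ℝ × ℝ × ℝ) :=
  {p | 0 < p.2.1 ∧ p.2.1 < p.2.2 ∧ p.2.2 < 2 * p.2.1 ∧ 0 < p.1 ∧ p.1 < p.2.2 - p.2.1}

/-- The Coulomb-branch structure of the `I₂ⁿˢ + I₄ⁿˢ`-model with Mordell–Weil group `ℤ/2ℤ`:
(i) on the dual Weyl cone of `A₁ ⊕ C₂` one has `ϖ₁ + ϖ₂ > 0`, so `ϖ₁` and `ϖ₂` are never both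
negative; (ii) the locus of the cone where `ϖ₁ ϖ₂ ≠ 0` is the disjoint union of exactly three
nonempty open chambers `[-,+]`, `[+,+]`, `[+,-]`, on which the signs of `(ϖ₁, ϖ₂)` are
respectively `(-,+)`, `(+,+)`, `(+,-)`. -/
theorem chambers_A1C2_bifundamental :
    (∀ p ∈ coneA1C2, 0 < wallOne p + wallTwo p) ∧
    ({p ∈ coneA1C2 | wallOne p * wallTwo p ≠ 0} = chamberMP ∪ chamberPP ∪ chamberPM) ∧
    (Disjoint chamberMP chamberPP ∧ Disjoint chamberMP chamberPM ∧
      Disjoint chamberPP chamberPM) ∧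
    (chamberMP.Nonempty ∧ chamberPP.Nonempty ∧ chamberPM.Nonempty) ∧
    (IsOpen chamberMP ∧ IsOpen chamberPP ∧ IsOpen chamberPM) ∧
    (∀ p ∈ chamberMP, wallOne p < 0 ∧ 0 < wallTwo p) ∧
    (∀ p ∈ chamberPP, 0 < wallOne p ∧ 0 < wallTwo p) ∧
    (∀ p ∈ chamberPM, 0 < wallOne p ∧ wallTwo p < 0) := by

  have hOpen : ∀ (f g : ℝ × ℝ × ℝ → ℝ), Continuous f → Continuous g →
      IsOpen {p : ℝ × ℝ × ℝ | f p < g p} := fun f g hf hg => isOpen_lt hf hg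
  have c1 : Continuous fun p : ℝ × ℝ × ℝ => p.1 := continuous_fst
  have c2 : Continuous fun p : ℝ × ℝ × ℝ => p.2.1 := continuous_snd.fst
  have c3 : Continuous fun p : ℝ × ℝ × ℝ => p.2.2 := continuous_snd.snd
  refine ⟨?_, ?_, ⟨?_, ?_, ?_⟩, ⟨⟨(2, 1.5, 2), ?_⟩, ⟨(1, 1.5, 2), ?_⟩, ⟨(0.5, 2, 3), ?_⟩⟩,
    ⟨?_, ?_, ?_⟩, ?_, ?_, ?_⟩
  · rintro p ⟨h1, h2, h3⟩
    simp only [wallOne, wallTwo]; linarith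
  · ext p
    simp only [Set.mem_setOf_eq, Set.mem_union, coneA1C2, wallOne, wallTwo, chamberMP,
      chamberPP, chamberPM, ne_eq, mul_eq_zero, not_or]
    constructor
    · rintro ⟨⟨h1, h2, h3⟩, hn1, hn2⟩
      rcases Ne.lt_or_gt hn1 with w1 | w1 <;> rcases Ne.lt_or_gt hn2 with w2 | w2
      · exfalso; linarith
      · left; left; refine ⟨by linarith, by linarith, by linarith, by linarith⟩
      · right; refine ⟨by linarith, by linarith, by linarith, by linarith, by linarith⟩
      · left; right; refine ⟨by linarith, by linarith, by linarith, by linarith, by linarith⟩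
    · rintro ((⟨h1, h2, h3, h4⟩ | ⟨h1, h2, h3, h4, h5⟩) | ⟨h1, h2, h3, h4, h5⟩) <;>
        refine ⟨⟨by linarith, by linarith, by linarith⟩, by intro h; linarith [h.le],
          by intro h; linarith [h.le]⟩
  · rw [Set.disjoint_left]
    rintro p ⟨_, _, _, h4⟩ ⟨_, _, _, _, h5⟩; exact absurd h4 (by linarith)
  · rw [Set.disjoint_left]
    rintro p ⟨_, h2, _, h4⟩ ⟨_, _, h3, _, h5⟩; exact absurd h4 (by linarith)
  · rw [Set.disjoint_left]
    rintro p ⟨_, _, _, h4, _⟩ ⟨_, _, _, _, h5⟩; exact absurd h4 (by linarith)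
  · refine ⟨by norm_num, by norm_num, by norm_num, by norm_num⟩
  · refine ⟨by norm_num, by norm_num, by norm_num, by norm_num, by norm_num⟩
  · refine ⟨by norm_num, by norm_num, by norm_num, by norm_num, by norm_num⟩
  · have : chamberMP = {p : ℝ × ℝ × ℝ | 0 < p.2.2} ∩ {p | p.2.2 / 2 < p.2.1} ∩
        {p | p.2.1 < p.2.2} ∩ {p | p.2.1 < p.1} := by
      ext p; simp [chamberMP, and_assoc]
    rw [this]
    exact (((hOpen _ _ continuous_const c3).inter (hOpen _ _ (c3.div_const 2) c2)).inter
      (hOpen _ _ c2 c3)).inter (hOpen _ _ c2 c1)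
  · have : chamberPP = {p : ℝ × ℝ × ℝ | 0 < p.2.2} ∩ {p | p.2.2 / 2 < p.2.1} ∩
        {p | p.2.1 < p.2.2} ∩ {p | p.2.2 - p.2.1 < p.1} ∩ {p | p.1 < p.2.1} := by
      ext p; simp [chamberPP, and_assoc]
    rw [this]
    exact ((((hOpen _ _ continuous_const c3).inter (hOpen _ _ (c3.div_const 2) c2)).inter
      (hOpen _ _ c2 c3)).inter (hOpen _ _ (c3.sub c2) c1)).inter (hOpen _ _ c1 c2)
  · have : chamberPM = {p : ℝ × ℝ × ℝ | 0 < p.2.1} ∩ {p | p.2.1 < p.2.2} ∩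
        {p | p.2.2 < 2 * p.2.1} ∩ {p | 0 < p.1} ∩ {p | p.1 < p.2.2 - p.2.1} := by
      ext p; simp [chamberPM, and_assoc]
    rw [this]
    exact ((((hOpen _ _ continuous_const c2).inter (hOpen _ _ c2 c3)).inter
      (hOpen _ _ c3 (continuous_const.mul c2))).inter (hOpen _ _ continuous_const c1)).inter
      (hOpen _ _ c1 (c3.sub c2))
  · rintro p ⟨h1, h2, h3, h4⟩; exact ⟨by simp only [wallOne]; linarith,
      by simp only [wallTwo]; linarith⟩
  · rintro p ⟨h1, h2, h3, h4, h5⟩; exact ⟨by simp only [wallOne]; linarith,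
      by simp only [wallTwo]; linarith⟩
  · rintro p ⟨h1, h2, h3, h4, h5⟩; exact ⟨by simp only [wallOne]; linarith,
      by simp only [wallTwo]; linarith⟩
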